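/- Let α ∈ (0,1) be irrational and θ ∈ [0,1), and let W be the word 1 0^{c₁-1} 1, where c₁ = ⌊1/α⌋. The frequency of occurrences of W in the Sturmian sequence ω(n) = χ_{[1-α,1)}(nα+θ mod 1) exists and equals (c₁+1)·α - 1. -/

import Mathlib

/-! With `c = ⌊1/α⌋` and `x = {nα + θ}`, irrationality of `α` gives `cα < 1 < (c+1)α`, and the
word `1 0^{c-1} 1` occurs at `n` exactly when `x ≥ 2 - (c+1)α`, i.e. when `x + (c+1)α` lies in
`[2, 3)` rather than in `[1, 2)`. So the indicator of an occurrence at `n` equals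
`(c+1)α - 1 + {nα + θ} - {(n+c+1)α + θ}`, and summed over `n < N` the fractional parts telescope
to an error bounded by `2(c+1)`. -/

open Filter

/-- The Sturmian sequence of slope `α` and phase `θ`:
`ω(n) = 1` iff `nα + θ mod 1 ∈ [1-α, 1)`, and `0` otherwise. -/
noncomputable def sturmian (α θ : ℝ) (n : ℤ) : ℕ :=
  if 1 - α ≤ Int.fract ((n : ℝ) * α + θ) ∧ Int.fract ((n : ℝ) * α + θ) < 1 then 1 else 0

open Finset Topology

theorem Int.fract_add_fract_right {R : Type*} [Ring R] [LinearOrder R] [FloorRing R]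
    [IsStrictOrderedRing R] (a b : R) : Int.fract (a + Int.fract b) = Int.fract (a + b) := by
  rw [← Int.self_sub_floor b, ← add_sub_assoc, Int.fract_sub_intCast]

theorem Int.fract_eq_sub_of_le_of_lt {R : Type*} [Ring R] [LinearOrder R] [FloorRing R]
    [IsStrictOrderedRing R] {a : R} {k : ℤ} (hk : k ≤ a) (hk' : a < k + 1) :
    Int.fract a = a - k := by
  rw [← Int.self_sub_floor, Int.floor_eq_iff.mpr ⟨hk, hk'⟩]

theorem Finset.sum_range_sub_shift {M : Type*} [AddCommGroup M] (u : ℕ → M) (N K : ℕ) :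
    ∑ n ∈ range N, (u n - u (n + K)) = ∑ i ∈ range K, u i - ∑ i ∈ range K, u (N + i) := by
  have h := Finset.sum_range_add u N K
  rw [add_comm N K, Finset.sum_range_add u K N] at h
  simp only [sum_sub_distrib, add_comm _ K]
  exact sub_eq_sub_iff_add_eq_add.mpr h.symm

theorem tendsto_sum_range_div_of_eq_add_sub_shift {f u : ℕ → ℝ} {L B : ℝ} (K : ℕ)
    (hu : ∀ n, |u n| ≤ B) (hf : ∀ n, f n = L + (u n - u (n + K))) :
    Tendsto (fun N : ℕ => (∑ n ∈ range N, f n) / N) atTop (𝓝 L) := by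
  set E : ℕ → ℝ := fun N => ∑ i ∈ range K, u i - ∑ i ∈ range K, u (N + i)
  have hE : ∀ N, |E N| ≤ 2 * K * B := fun N => calc
    |E N| ≤ |∑ i ∈ range K, u i| + |∑ i ∈ range K, u (N + i)| := abs_sub _ _
    _ ≤ ∑ i ∈ range K, |u i| + ∑ i ∈ range K, |u (N + i)| :=
      add_le_add (abs_sum_le_sum_abs _ _) (abs_sum_le_sum_abs _ _)
    _ ≤ ∑ _i ∈ range K, B + ∑ _i ∈ range K, B :=
      add_le_add (sum_le_sum fun i _ => hu i) (sum_le_sum fun i _ => hu (N + i))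
    _ = 2 * K * B := by simp only [sum_const, card_range, nsmul_eq_mul]; ring
  have hE_div : Tendsto (fun N : ℕ => E N / N) atTop (𝓝 0) :=
    squeeze_zero_norm
      (fun N => by simpa [norm_div] using div_le_div_of_nonneg_right (hE N) N.cast_nonneg)
      (tendsto_const_div_atTop_nhds_zero_nat _)
  have hlim := (tendsto_const_nhds (x := L)).add hE_div
  rw [add_zero] at hlim
  refine hlim.congr' ?_
  filter_upwards [eventually_ne_atTop 0] with N hN
  rw [sum_congr rfl fun n _ => hf n, sum_add_distrib, sum_range_sub_shift, sum_const,
    card_range, nsmul_eq_mul]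
  field_simp
  rfl

theorem fract_add_natCast_mul (α θ : ℝ) (n : ℤ) (j : ℕ) :
    Int.fract (((n + j : ℤ) : ℝ) * α + θ) = Int.fract (j * α + Int.fract ((n : ℝ) * α + θ)) := by
  rw [Int.fract_add_fract_right]; push_cast; ring_nf

def OneZerosOneAt (α θ : ℝ) (c : ℕ) (n : ℤ) : Prop :=
  sturmian α θ n = 1 ∧ (∀ j : ℕ, 1 ≤ j → j ≤ c - 1 → sturmian α θ (n + j) = 0) ∧
    sturmian α θ (n + c) = 1

section Sturmian

variable {α : ℝ} (θ : ℝ)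

theorem one_le_natFloor_inv (h0 : 0 < α) (h1 : α < 1) : 1 ≤ ⌊1 / α⌋₊ :=
  (Nat.one_le_floor_iff _).mpr (by rw [le_div_iff₀ h0]; linarith)

theorem natFloor_inv_mul_lt_one (hirr : Irrational α) (h0 : 0 < α) :
    (⌊1 / α⌋₊ : ℝ) * α < 1 := by
  refine lt_of_le_of_ne ((le_div_iff₀ h0).mp (Nat.floor_le (by positivity))) fun h => ?_
  have hc : (⌊1 / α⌋₊ : ℝ) ≠ 0 := left_ne_zero_of_mul_eq_one h
  exact hirr.ne_rat (1 / ⌊1 / α⌋₊) (by push_cast; field_simp; linarith)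

theorem one_lt_natFloor_inv_add_one_mul (h0 : 0 < α) : 1 < ((⌊1 / α⌋₊ : ℝ) + 1) * α := by
  have := Nat.lt_floor_add_one (1 / α)
  rwa [div_lt_iff₀ h0] at this

theorem sturmian_eq_one_iff (n : ℤ) :
    sturmian α θ n = 1 ↔ 1 - α ≤ Int.fract ((n : ℝ) * α + θ) := by
  simp [sturmian, Int.fract_lt_one]

theorem sturmian_eq_zero_iff (n : ℤ) :
    sturmian α θ n = 0 ↔ Int.fract ((n : ℝ) * α + θ) < 1 - α := by
  simp [sturmian, Int.fract_lt_one, lt_sub_iff_add_lt]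

theorem oneZerosOneAt_iff (h0 : 0 < α) {c : ℕ} (hc : 1 ≤ c) (hcα : c * α < 1) (n : ℤ) :
    OneZerosOneAt α θ c n ↔ 2 - (c + 1) * α ≤ Int.fract ((n : ℝ) * α + θ) := by
  set x := Int.fract ((n : ℝ) * α + θ) with hx
  have hx1 : x < 1 := Int.fract_lt_one _
  have hshift : ∀ j : ℕ, 1 ≤ j → j ≤ c → 1 - α ≤ x → Int.fract (j * α + x) = j * α + x - 1 := by
    intro j hj hjc hxα
    have hαj : α ≤ j * α := le_mul_of_one_le_left h0.le (by exact_mod_cast hj)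
    have hjα : j * α ≤ c * α := mul_le_mul_of_nonneg_right (by exact_mod_cast hjc) h0.le
    exact_mod_cast Int.fract_eq_sub_of_le_of_lt (k := 1) (by push_cast; linarith)
      (by push_cast; linarith)
  simp only [OneZerosOneAt, sturmian_eq_one_iff, sturmian_eq_zero_iff, fract_add_natCast_mul,
    ← hx]
  constructor
  · rintro ⟨hxα, -, hlast⟩
    rw [hshift c hc le_rfl hxα] at hlast
    linarith
  · intro hx2
    have hxα : 1 - α ≤ x := by linarith
    refine ⟨hxα, fun j hj hjc => ?_, ?_⟩
    · have hjc' : (j : ℝ) + 1 ≤ c := by exact_mod_cast (by omega : j + 1 ≤ c)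
      rw [hshift j hj (by omega) hxα]
      nlinarith
    · rw [hshift c hc le_rfl hxα]
      linarith

theorem ite_oneZerosOneAt_eq (h0 : 0 < α) {c : ℕ} (hc : 1 ≤ c) (hcα : c * α < 1)
    (hcα' : 1 < (c + 1) * α) (n : ℕ) [Decidable (OneZerosOneAt α θ c n)] :
    (if OneZerosOneAt α θ c n then (1 : ℝ) else 0) = (c + 1) * α - 1 +
      (Int.fract ((n : ℝ) * α + θ) - Int.fract (((n + (c + 1) : ℕ) : ℝ) * α + θ)) := by
  have hα : α ≤ c * α := le_mul_of_one_le_left h0.le (by exact_mod_cast hc)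
  have hshift := fract_add_natCast_mul α θ n (c + 1)
  push_cast at hshift ⊢
  simp only [hshift, oneZerosOneAt_iff θ h0 hc hcα, Int.cast_natCast]
  set x := Int.fract ((n : ℝ) * α + θ)
  have hx0 : 0 ≤ x := Int.fract_nonneg _
  have hx1 : x < 1 := Int.fract_lt_one _
  split_ifs with h
  · rw [Int.fract_eq_sub_of_le_of_lt (k := 2) (by push_cast; linarith) (by push_cast; linarith)]
    push_cast; ring
  · rw [Int.fract_eq_sub_of_le_of_lt (k := 1) (by push_cast; linarith) (by push_cast; linarith)]
    push_cast; ring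

end Sturmian

open scoped Classical in
theorem stmt_8_general (α θ : ℝ) (hirr : Irrational α) (h0 : 0 < α) (h1 : α < 1)
    (c₁ : ℕ) (hc₁ : c₁ = ⌊1 / α⌋₊) :
    Tendsto
      (fun N : ℕ =>
        (((Finset.range N).filter (fun n : ℕ =>
            sturmian α θ (n : ℤ) = 1 ∧
            (∀ j : ℕ, 1 ≤ j → j ≤ c₁ - 1 → sturmian α θ ((n : ℤ) + j) = 0) ∧
            sturmian α θ ((n : ℤ) + c₁) = 1)).card : ℝ) / N)
      atTop (nhds ((↑c₁ + 1) * α - 1)) := by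
  subst hc₁
  have hcount := tendsto_sum_range_div_of_eq_add_sub_shift (B := 1) _
    (fun n => (Int.abs_fract (a := (n : ℝ) * α + θ)).trans_le (Int.fract_lt_one _).le) fun n =>
      ite_oneZerosOneAt_eq θ h0 (one_le_natFloor_inv h0 h1) (natFloor_inv_mul_lt_one hirr h0)
        (one_lt_natFloor_inv_add_one_mul h0) n
  refine hcount.congr fun N => ?_
  rw [natCast_card_filter]
  congr!

open scoped Classical in
/-- The frequency of the word `W = 1 0^{c₁-1} 1` in the Sturmian sequence of slope `α`
exists and equals `(c₁+1)·α - 1`, where `c₁ = ⌊1/α⌋`. -/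
theorem stmt_8 (α θ : ℝ) (hirr : Irrational α) (h0 : 0 < α) (h1 : α < 1)
    (hθ : θ ∈ Set.Ico (0 : ℝ) 1) (c₁ : ℕ) (hc₁ : c₁ = ⌊1 / α⌋₊) :
    Tendsto
      (fun N : ℕ =>
        (((Finset.range N).filter (fun n : ℕ =>
            sturmian α θ (n : ℤ) = 1 ∧
            (∀ j : ℕ, 1 ≤ j → j ≤ c₁ - 1 → sturmian α θ ((n : ℤ) + j) = 0) ∧
            sturmian α θ ((n : ℤ) + c₁) = 1)).card : ℝ) / N)
      atTop (nhds ((↑c₁ + 1) * α - 1)) :=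
  stmt_8_general α θ hirr h0 h1 c₁ hc₁
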